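/- A compartmental matrix A (nonnegative with all column sums at most 1) is Schur stable (spectral radius strictly less than 1) if and only if every node of D(A) is outflow-connected, i.e., from every node there is a directed path to a node i with ∑_j A_{ji} < 1. -/

import Mathlib

/-!
Both sides are statements about the column sums `1 ᵥ* A ^ m` of the powers of `A`.

By Gelfand's formula, `ρ(A) < 1` iff some power has operator norm `< 1`; for the maximum
column sum norm (the `∞`-operator norm of the transpose, which has the same spectrum) this says
that every column of some `A ^ m` sums to less than `1`.

The column sums of `A ^ m` are nonincreasing in `m`, since `1 ᵥ* A ^ (m + 1) = (1 ᵥ* A) ᵥ* A ^ m`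
and `1 ᵥ* A ≤ 1`. If node `i` reaches an outflow node `k` in `m` steps, then `(A ^ m) k i > 0`,
so the deficit `1 - (1 ᵥ* A) k` leaks out of column `i` of `A ^ (m + 1)`; by monotonicity one
exponent serves all columns. If instead no node reachable from `i` is an outflow node, then that
reachable set is closed and conservative, and column `i` of every power of `A` sums to exactly `1`.
-/

open Filter Matrix

section BanachAlgebra

variable {𝒜 : Type*} [NormedRing 𝒜] [NormedAlgebra ℂ 𝒜] [CompleteSpace 𝒜] [NormOneClass 𝒜]

theorem spectralRadius_lt_one_iff_exists_nnnorm_pow_lt_one (a : 𝒜) :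
    spectralRadius ℂ a < 1 ↔ ∃ m, ‖a ^ m‖₊ < 1 := by
  constructor
  · intro h
    obtain ⟨m, hm, hm1⟩ :=
      (((spectrum.pow_nnnorm_pow_one_div_tendsto_nhds_spectralRadius a).eventually
        (gt_mem_nhds h)).and (eventually_ge_atTop 1)).exists
    refine ⟨m, ?_⟩
    by_contra! hge
    exact hm.not_ge (ENNReal.one_le_rpow (by exact_mod_cast hge) (by positivity))
  · rintro ⟨m, hm⟩
    have hm0 : m ≠ 0 := by rintro rfl; simp at hm
    have hle : spectralRadius ℂ a ^ m ≤ ‖a ^ m‖₊ :=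
      (spectrum.spectralRadius_pow_le a m hm0).trans (spectrum.spectralRadius_le_nnnorm _)
    exact (pow_lt_one_iff hm0).mp (hle.trans_lt (by exact_mod_cast hm))

end BanachAlgebra

namespace Matrix

variable {ι : Type*} [Fintype ι] [DecidableEq ι]

theorem spectrum_transpose {R : Type*} [CommRing R] (M : Matrix ι ι R) :
    spectrum R Mᵀ = spectrum R M := by
  ext μ
  simp only [spectrum.mem_iff, Algebra.algebraMap_eq_smul_one, isUnit_iff_isUnit_det,
    ← det_transpose (μ • 1 - M), transpose_sub, transpose_smul, transpose_one]

theorem spectralRadius_transpose {𝕜 : Type*} [NormedField 𝕜] (M : Matrix ι ι 𝕜) :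
    spectralRadius 𝕜 Mᵀ = spectralRadius 𝕜 M := by
  rw [spectralRadius, spectrum_transpose, spectralRadius]

section LinftyOpNorm

attribute [local instance] Matrix.linftyOpNormedRing Matrix.linftyOpNormedAlgebra

theorem spectralRadius_lt_one_iff_exists_sum_norm_pow_lt_one (M : Matrix ι ι ℂ) :
    spectralRadius ℂ M < 1 ↔ ∃ m, ∀ j, ∑ i, ‖(M ^ m) i j‖ < 1 := by
  cases isEmpty_or_nonempty ι
  · simp
  rw [← spectralRadius_transpose, spectralRadius_lt_one_iff_exists_nnnorm_pow_lt_one]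
  refine exists_congr fun m => ?_
  rw [← transpose_pow, linfty_opNNNorm_def, Finset.sup_lt_iff (by simp)]
  simp only [Finset.mem_univ, true_imp_iff, transpose_apply, ← NNReal.coe_lt_coe,
    NNReal.coe_sum, coe_nnnorm, NNReal.coe_one]

end LinftyOpNorm

theorem vecMul_le_vecMul_of_nonneg {m n R : Type*} [Fintype m] [Semiring R] [PartialOrder R]
    [IsOrderedRing R] {M : Matrix m n R} (hM : ∀ i j, 0 ≤ M i j) {v w : m → R} (hvw : v ≤ w) :
    v ᵥ* M ≤ w ᵥ* M := fun j =>
  Finset.sum_le_sum fun i _ => mul_le_mul_of_nonneg_right (hvw i) (hM i j)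

section Compartmental

variable {R : Type*} [Ring R] [LinearOrder R] {A : Matrix ι ι R}

theorem one_vecMul_pow_apply_eq_one (hA : ∀ i j, 0 ≤ A i j) {i : ι}
    (hclosed : ∀ k, Relation.ReflTransGen (fun a b => 0 < A b a) i k → (1 ᵥ* A) k = 1)
    (m : ℕ) : (1 ᵥ* A ^ m) i = 1 := by
  suffices ∀ j, Relation.ReflTransGen (fun a b => 0 < A b a) i j → (1 ᵥ* A ^ m) j = 1 from
    this i .refl
  induction m with
  | zero => simp
  | succ m ih =>
    intro j hj
    rw [pow_succ, ← vecMul_vecMul, ← hclosed j hj]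
    refine Finset.sum_congr rfl fun k _ => ?_
    rcases (hA k j).eq_or_lt with h0 | hpos
    · simp [← h0]
    · simp [ih k (hj.tail hpos)]

variable [IsStrictOrderedRing R]

theorem antitone_one_vecMul_pow (hA : ∀ i j, 0 ≤ A i j) (hcol : 1 ᵥ* A ≤ 1) :
    Antitone fun m => 1 ᵥ* A ^ m :=
  antitone_nat_of_succ_le fun m => by
    simpa only [pow_succ', ← vecMul_vecMul] using
      vecMul_le_vecMul_of_nonneg (pow_apply_nonneg hA m) hcol

theorem one_vecMul_pow_le_one (hA : ∀ i j, 0 ≤ A i j) (hcol : 1 ᵥ* A ≤ 1) (m : ℕ) :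
    1 ᵥ* A ^ m ≤ 1 := by
  simpa using antitone_one_vecMul_pow hA hcol (Nat.zero_le m)

theorem exists_pow_apply_pos_of_reflTransGen (hA : ∀ i j, 0 ≤ A i j) {i k : ι}
    (h : Relation.ReflTransGen (fun a b => 0 < A b a) i k) : ∃ m, 0 < (A ^ m) k i := by
  induction h with
  | refl => exact ⟨0, by simp⟩
  | @tail b c _ hbc ih =>
    obtain ⟨m, hm⟩ := ih
    refine ⟨m + 1, ?_⟩
    rw [pow_succ', mul_apply]
    exact Finset.sum_pos' (fun l _ => mul_nonneg (hA c l) (pow_apply_nonneg hA m l i))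
      ⟨b, Finset.mem_univ b, mul_pos hbc hm⟩

theorem exists_one_vecMul_pow_apply_lt_one (hA : ∀ i j, 0 ≤ A i j) (hcol : 1 ᵥ* A ≤ 1)
    {i k : ι} (h : Relation.ReflTransGen (fun a b => 0 < A b a) i k) (hk : (1 ᵥ* A) k < 1) :
    ∃ m, (1 ᵥ* A ^ m) i < 1 := by
  obtain ⟨m, hm⟩ := exists_pow_apply_pos_of_reflTransGen hA h
  refine ⟨m + 1, ?_⟩
  calc (1 ᵥ* A ^ (m + 1)) i = ∑ l, (1 ᵥ* A) l * (A ^ m) l i := by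
        rw [pow_succ', ← vecMul_vecMul]; rfl
    _ < ∑ l, 1 * (A ^ m) l i :=
        Finset.sum_lt_sum
          (fun l _ => mul_le_mul_of_nonneg_right (hcol l) (pow_apply_nonneg hA m l i))
          ⟨k, Finset.mem_univ k, mul_lt_mul_of_pos_right hk hm⟩
    _ = (1 ᵥ* A ^ m) i := rfl
    _ ≤ 1 := one_vecMul_pow_le_one hA hcol m i

theorem exists_forall_one_vecMul_pow_lt_one_iff (hA : ∀ i j, 0 ≤ A i j) (hcol : 1 ᵥ* A ≤ 1) :
    (∃ m, ∀ j, (1 ᵥ* A ^ m) j < 1) ↔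
      ∀ i, ∃ k, Relation.ReflTransGen (fun a b => 0 < A b a) i k ∧ (1 ᵥ* A) k < 1 := by
  constructor
  · rintro ⟨m, hm⟩ i
    by_contra! hclosed
    exact (hm i).ne <|
      one_vecMul_pow_apply_eq_one hA (fun k hk => (hcol k).antisymm (hclosed k hk)) m
  · intro h
    choose m hm using fun i ↦
      have ⟨_, hik, hk⟩ := h i
      exists_one_vecMul_pow_apply_lt_one hA hcol hik hk
    exact ⟨Finset.univ.sup m, fun j =>
      (antitone_one_vecMul_pow hA hcol (Finset.le_sup (Finset.mem_univ j)) j).trans_lt (hm j)⟩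

end Compartmental

end Matrix

/-- A compartmental matrix (nonnegative with column sums at most 1) is Schur stable
(spectral radius < 1) iff every node of its digraph is outflow-connected, i.e. from every
node there is a directed path (arc `(i,j)` iff `A j i > 0`) to an outflow node `k`
whose column sum is strictly less than 1. -/
theorem compartmental_schur_iff_outflow_connected
    {n : ℕ} (A : Matrix (Fin n) (Fin n) ℝ)
    (hA : ∀ i j, 0 ≤ A i j) (hcol : ∀ j, ∑ i, A i j ≤ 1) :
    spectralRadius ℂ (A.map Complex.ofReal) < 1 ↔
      ∀ i : Fin n, ∃ k : Fin n,
        Relation.ReflTransGen (fun a b => 0 < A b a) i k ∧ ∑ l, A l k < 1 := by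
  have hcol' : 1 ᵥ* A ≤ 1 := fun j => by simpa [vecMul, dotProduct] using hcol j
  have hnorm (m : ℕ) (j : Fin n) :
      ∑ i, ‖(A.map Complex.ofReal ^ m) i j‖ = (1 ᵥ* A ^ m) j := by
    have hpow : A.map Complex.ofReal ^ m = (A ^ m).map Complex.ofReal :=
      (map_pow Complex.ofRealHom.mapMatrix A m).symm
    simp [hpow, vecMul, dotProduct, abs_of_nonneg (pow_apply_nonneg hA _ _ _)]
  rw [spectralRadius_lt_one_iff_exists_sum_norm_pow_lt_one]
  simpa only [hnorm, vecMul, dotProduct, Pi.one_apply, one_mul] using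
    exists_forall_one_vecMul_pow_lt_one_iff hA hcol'
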